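/- Let ψ be a Grössencharacter of E of modulus m and weight ℓ ≥ 1, and let r be the order of its modulus character η_ψ. Let 𝔱₁, …, 𝔱_g be nonzero ideals of O_E coprime to m whose ideal classes generate Cl(E); let n_i be the order of the class of 𝔱_i in Cl(E), and let θ_i ∈ O_E satisfy 𝔱_i^{n_i} = θ_i O_E. Then there exist u₁, …, u_g ∈ ℂ with u_i^r = 1 and x₁, …, x_g ∈ ℂ with x_i^{n_i} = u_i·θ_i^ℓ, such that the value field L_ψ is the subfield of ℂ generated by E, a primitive r-th root of unity e^{2πi/r}, and x₁, …, x_g. -/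

import Mathlib

noncomputable section

open NumberField IntermediateField
open scoped nonZeroDivisors
set_option maxHeartbeats 1000000
set_option synthInstance.maxHeartbeats 200000
set_option linter.unusedSectionVars false
set_option linter.unusedTactic false

/-- `E` is an imaginary quadratic subfield of `ℂ`: `[E : ℚ] = 2` and `E ⊄ ℝ`. -/
def IsImagQuad (E : IntermediateField ℚ ℂ) : Prop :=
  Module.finrank ℚ E = 2 ∧ ∃ z : E, (z : ℂ).im ≠ 0

variable (E : IntermediateField ℚ ℂ)

/-- A fractional ideal `J` of `E` is coprime to the modulus `m` if it is a quotient `a/b` of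
integral ideals `a`, `b` each coprime to `m`. -/
def FracCoprime (m : Ideal (𝓞 E)) (J : FractionalIdeal (𝓞 E)⁰ E) : Prop :=
  ∃ a b : Ideal (𝓞 E), IsCoprime a m ∧ IsCoprime b m ∧
    J * (b : FractionalIdeal (𝓞 E)⁰ E) = (a : FractionalIdeal (𝓞 E)⁰ E)

/-- A Grössencharacter of `E` of modulus `m` and weight `ℓ`: a homomorphism from the group of
fractional ideals of `E` coprime to `m` to `ℂˣ` such that `ψ(αO_E) = α ^ ℓ` whenever
`α O_E` is coprime to `m` and `α ≡ 1 mod m`.  (The function is recorded on all fractional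
ideals; only its values on those coprime to `m` are constrained or ever used.) -/
structure Grossenchar (m : Ideal (𝓞 E)) (ℓ : ℕ) where
  toFun : FractionalIdeal (𝓞 E)⁰ E → ℂ
  map_one' : toFun 1 = 1
  ne_zero' : ∀ J, FracCoprime E m J → toFun J ≠ 0
  map_mul' : ∀ J J', FracCoprime E m J → FracCoprime E m J' →
    toFun (J * J') = toFun J * toFun J'
  princ' : ∀ α : 𝓞 E, IsCoprime (Ideal.span {α}) m → α - 1 ∈ m →
    toFun ((Ideal.span {α} : Ideal (𝓞 E)) : FractionalIdeal (𝓞 E)⁰ E) = ((α : E) : ℂ) ^ ℓ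

namespace Grossenchar

variable {E} {m : Ideal (𝓞 E)} {ℓ : ℕ}

/-- The value field of a Grössencharacter: the subfield of `ℂ` generated by the image of `ψ`
(i.e. by its values on the fractional ideals coprime to the modulus). -/
def valueField (ψ : Grossenchar E m ℓ) : IntermediateField ℚ ℂ :=
  IntermediateField.adjoin ℚ (ψ.toFun '' {J | FracCoprime E m J})

end Grossenchar

section Aux

variable {E : IntermediateField ℚ ℂ} [NumberField E] {m : Ideal (𝓞 E)} {ℓ : ℕ}

lemma isCoprime_top_m (m : Ideal (𝓞 E)) : IsCoprime (⊤ : Ideal (𝓞 E)) m := by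
  rw [Ideal.isCoprime_iff_sup_eq]; simp

lemma fc_coe {a : Ideal (𝓞 E)} (ha : IsCoprime a m) :
    FracCoprime E m (a : FractionalIdeal (𝓞 E)⁰ E) := by
  refine ⟨a, ⊤, ha, isCoprime_top_m m, ?_⟩
  rw [← Ideal.one_eq_top]
  norm_cast
  rw [mul_one]

lemma fc_one : FracCoprime E m 1 := by
  simpa using fc_coe (m := m) (a := (⊤ : Ideal (𝓞 E))) (isCoprime_top_m m)

lemma m_ne_top (ψ : Grossenchar E m ℓ) (hℓ : 1 ≤ ℓ) : m ≠ ⊤ := by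
  intro h
  subst h
  have h0 : IsCoprime (Ideal.span {(0 : 𝓞 E)}) (⊤ : Ideal (𝓞 E)) := by
    rw [Ideal.isCoprime_iff_sup_eq]; simp
  have h1 := ψ.princ' 0 h0 (by simp)
  have h2 := ψ.ne_zero' _ (fc_coe h0)
  apply h2
  rw [h1]
  have h3 : (((0 : 𝓞 E) : E) : ℂ) = 0 := by norm_num
  rw [h3]
  exact zero_pow (by omega)

lemma coprime_ne_zero (hm : m ≠ ⊤) {a : Ideal (𝓞 E)} (ha : IsCoprime a m) : a ≠ 0 := by
  rintro rfl
  exact hm (Ideal.isUnit_iff.mp (isCoprime_zero_left.mp ha))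

lemma fc_ne_zero (hm : m ≠ ⊤) {J : FractionalIdeal (𝓞 E)⁰ E} (h : FracCoprime E m J) :
    J ≠ 0 := by
  obtain ⟨a, b, ha, hb, hab⟩ := h
  intro hJ
  rw [hJ, zero_mul] at hab
  exact coprime_ne_zero hm ha (by simpa [eq_comm, FractionalIdeal.coeIdeal_eq_zero] using hab)

lemma fc_mul {J J' : FractionalIdeal (𝓞 E)⁰ E} (h : FracCoprime E m J)
    (h' : FracCoprime E m J') : FracCoprime E m (J * J') := by
  obtain ⟨a, b, ha, hb, hab⟩ := h
  obtain ⟨a', b', ha', hb', hab'⟩ := h'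
  exact ⟨a * a', b * b', ha.mul_left ha', hb.mul_left hb', by
    rw [FractionalIdeal.coeIdeal_mul, FractionalIdeal.coeIdeal_mul, mul_mul_mul_comm, hab, hab']⟩

lemma fc_inv (hm : m ≠ ⊤) {J : FractionalIdeal (𝓞 E)⁰ E} (h : FracCoprime E m J) :
    FracCoprime E m J⁻¹ := by
  obtain ⟨a, b, ha, hb, hab⟩ := h
  have hJ : J ≠ 0 := fc_ne_zero hm ⟨a, b, ha, hb, hab⟩
  refine ⟨b, a, hb, ha, ?_⟩
  rw [← hab, ← mul_assoc, inv_mul_cancel₀ hJ, one_mul]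

lemma fc_pow {J : FractionalIdeal (𝓞 E)⁰ E} (h : FracCoprime E m J) (n : ℕ) :
    FracCoprime E m (J ^ n) := by
  induction n with
  | zero => simpa using fc_one
  | succ k ih => rw [pow_succ]; exact fc_mul ih h

lemma psi_inv (ψ : Grossenchar E m ℓ) (hm : m ≠ ⊤) {J : FractionalIdeal (𝓞 E)⁰ E}
    (h : FracCoprime E m J) : ψ.toFun J⁻¹ = (ψ.toFun J)⁻¹ := by
  have h1 := ψ.map_mul' J⁻¹ J (fc_inv hm h) h
  rw [inv_mul_cancel₀ (fc_ne_zero hm h), ψ.map_one'] at h1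
  exact eq_inv_of_mul_eq_one_left h1.symm

lemma psi_pow (ψ : Grossenchar E m ℓ) {J : FractionalIdeal (𝓞 E)⁰ E}
    (h : FracCoprime E m J) (n : ℕ) : ψ.toFun (J ^ n) = ψ.toFun J ^ n := by
  induction n with
  | zero => simpa using ψ.map_one'
  | succ k ih => rw [pow_succ, pow_succ, ψ.map_mul' _ _ (fc_pow h k) h, ih]

lemma psi_coe_pow (ψ : Grossenchar E m ℓ) {a : Ideal (𝓞 E)} (ha : IsCoprime a m) (n : ℕ) :
    ψ.toFun ((a ^ n : Ideal (𝓞 E)) : FractionalIdeal (𝓞 E)⁰ E)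
      = ψ.toFun (a : FractionalIdeal (𝓞 E)⁰ E) ^ n := by
  rw [FractionalIdeal.coeIdeal_pow, psi_pow ψ (fc_coe ha)]


lemma key_principal (ψ : Grossenchar E m ℓ) (hm : m ≠ ⊤) (γ : E)
    (h : FracCoprime E m (FractionalIdeal.spanSingleton (𝓞 E)⁰ γ)) :
    ∃ α β : 𝓞 E, IsCoprime (Ideal.span {α}) m ∧ β ≠ 0 ∧
      ψ.toFun (FractionalIdeal.spanSingleton (𝓞 E)⁰ γ)
        = ψ.toFun ((Ideal.span {α} : Ideal (𝓞 E)) : FractionalIdeal (𝓞 E)⁰ E)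
            / ((β : E) : ℂ) ^ ℓ := by
  obtain ⟨a, b, ha, hb, hab⟩ := h
  -- choose β ∈ b with β ≡ 1 mod m
  have hsup : b ⊔ m = ⊤ := hb.sup_eq
  have h1 : (1 : 𝓞 E) ∈ b ⊔ m := hsup ▸ Submodule.mem_top
  obtain ⟨β, hβb, μ, hμ, hsum⟩ := Submodule.mem_sup.mp h1
  have hβcop : IsCoprime (Ideal.span {β}) m := by
    rw [Ideal.isCoprime_iff_sup_eq, Ideal.eq_top_iff_one, ← hsum]
    exact Submodule.add_mem_sup (Ideal.mem_span_singleton_self β) hμ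
  have hβ0 : β ≠ 0 := by
    rintro rfl
    rw [zero_add] at hsum
    exact hm ((Ideal.eq_top_iff_one m).mpr (hsum ▸ hμ))
  -- α := γ β is integral
  have h2 : γ * algebraMap (𝓞 E) E β ∈
      FractionalIdeal.spanSingleton (𝓞 E)⁰ γ * (b : FractionalIdeal (𝓞 E)⁰ E) :=
    FractionalIdeal.mul_mem_mul (FractionalIdeal.mem_spanSingleton_self _ γ)
      ((FractionalIdeal.mem_coeIdeal _).mpr ⟨β, hβb, rfl⟩)
  rw [hab] at h2
  obtain ⟨α, hαa, hα⟩ := (FractionalIdeal.mem_coeIdeal _).mp h2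
  have hcoe : ((Ideal.span {α} : Ideal (𝓞 E)) : FractionalIdeal (𝓞 E)⁰ E)
      = FractionalIdeal.spanSingleton (𝓞 E)⁰ γ
        * ((Ideal.span {β} : Ideal (𝓞 E)) : FractionalIdeal (𝓞 E)⁰ E) := by
    rw [FractionalIdeal.coeIdeal_span_singleton, FractionalIdeal.coeIdeal_span_singleton,
      FractionalIdeal.spanSingleton_mul_spanSingleton, hα]
  -- coprimality of span {α}
  obtain ⟨c, hc⟩ : b ∣ Ideal.span {β} :=
    Ideal.dvd_iff_le.mpr ((Ideal.span_singleton_le_iff_mem _).mpr hβb)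
  have hcc : IsCoprime c m := by
    rw [Ideal.isCoprime_iff_sup_eq, Ideal.eq_top_iff_one, ← hsum]
    refine Submodule.add_mem_sup ?_ hμ
    exact Ideal.mul_le_right (by rw [← hc]; exact Ideal.mem_span_singleton_self β : β ∈ b * c)
  have hb0 : b ≠ 0 := coprime_ne_zero hm hb
  have h3 : Ideal.span {α} * b = (a * c) * b := by
    rw [← FractionalIdeal.coeIdeal_inj (K := E), FractionalIdeal.coeIdeal_mul,
      FractionalIdeal.coeIdeal_mul, hcoe, mul_right_comm, hab,
      FractionalIdeal.coeIdeal_mul]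
    rw [hc, FractionalIdeal.coeIdeal_mul]
    ring
  have h4 : Ideal.span {α} = a * c := mul_right_cancel₀ hb0 h3
  have hαcop : IsCoprime (Ideal.span {α}) m := h4 ▸ ha.mul_left hcc
  refine ⟨α, β, hαcop, hβ0, ?_⟩
  have h5 := ψ.map_mul' _ _ (⟨a, b, ha, hb, hab⟩ : FracCoprime E m _) (fc_coe hβcop)
  rw [← hcoe] at h5
  rw [h5, ψ.princ' β hβcop (by
    have : β - 1 = -μ := by rw [← hsum]; ring
    rw [this]; exact neg_mem hμ)]
  have hβℂ : ((β : E) : ℂ) ^ ℓ ≠ 0 := by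
    apply pow_ne_zero
    simp only [ne_eq, map_eq_zero]
    exact_mod_cast hβ0
  field_simp


lemma psi_image_mem (ψ : Grossenchar E m ℓ) (hm : m ≠ ⊤) (F : IntermediateField ℚ ℂ)
    (hprinc : ∀ γ : E, FracCoprime E m (FractionalIdeal.spanSingleton (𝓞 E)⁰ γ) →
      ψ.toFun (FractionalIdeal.spanSingleton (𝓞 E)⁰ γ) ∈ F)
    (g : ℕ) (𝔱 : Fin g → Ideal (𝓞 E)) (h0 : ∀ i, 𝔱 i ≠ 0)
    (hcop : ∀ i, IsCoprime (𝔱 i) m)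
    (hgen : Subgroup.closure
      (Set.range fun i => ClassGroup.mk0 ⟨𝔱 i, mem_nonZeroDivisors_of_ne_zero (h0 i)⟩) = ⊤)
    (hx : ∀ i, ψ.toFun ((𝔱 i : Ideal (𝓞 E)) : FractionalIdeal (𝓞 E)⁰ E) ∈ F) :
    ∀ J, FracCoprime E m J → ψ.toFun J ∈ F := by
  have main : ∀ c : ClassGroup (𝓞 E), ∃ K : Ideal (𝓞 E), ∃ hK : K ≠ 0,
      IsCoprime K m ∧ ψ.toFun ((K : Ideal (𝓞 E)) : FractionalIdeal (𝓞 E)⁰ E) ∈ F ∧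
      ClassGroup.mk0 ⟨K, mem_nonZeroDivisors_of_ne_zero hK⟩ = c := by
    intro c
    have hc : c ∈ Subgroup.closure
        (Set.range fun i => ClassGroup.mk0 ⟨𝔱 i, mem_nonZeroDivisors_of_ne_zero (h0 i)⟩) :=
      hgen ▸ Subgroup.mem_top c
    induction hc using Subgroup.closure_induction with
    | mem x hxx =>
      obtain ⟨i, rfl⟩ := hxx
      exact ⟨𝔱 i, h0 i, hcop i, hx i, rfl⟩
    | one =>
      refine ⟨⊤, ?_, isCoprime_top_m m, ?_, ?_⟩
      · rw [Ideal.zero_eq_bot]; exact top_ne_bot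
      · rw [FractionalIdeal.coeIdeal_top, ψ.map_one']
        exact one_mem F
      · have he : (⟨⊤, mem_nonZeroDivisors_of_ne_zero (by rw [Ideal.zero_eq_bot]; exact top_ne_bot)⟩ :
            (Ideal (𝓞 E))⁰) = 1 := Subtype.ext Ideal.one_eq_top.symm
        rw [he, map_one]
    | mul x y hxx hyy ihx ihy =>
      obtain ⟨K1, hK1, c1, m1, e1⟩ := ihx
      obtain ⟨K2, hK2, c2, m2, e2⟩ := ihy
      refine ⟨K1 * K2, mul_ne_zero hK1 hK2, c1.mul_left c2, ?_, ?_⟩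
      · rw [FractionalIdeal.coeIdeal_mul, ψ.map_mul' _ _ (fc_coe c1) (fc_coe c2)]
        exact mul_mem m1 m2
      · have he : (⟨K1 * K2, mem_nonZeroDivisors_of_ne_zero (mul_ne_zero hK1 hK2)⟩ :
            (Ideal (𝓞 E))⁰)
            = ⟨K1, mem_nonZeroDivisors_of_ne_zero hK1⟩ * ⟨K2, mem_nonZeroDivisors_of_ne_zero hK2⟩ :=
          rfl
        rw [he, map_mul, e1, e2]
    | inv x hxx ihx =>
      obtain ⟨K, hK, cK, mK, eK⟩ := ihx
      set k := Nat.card (ClassGroup (𝓞 E)) with hk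
      have hk1 : 1 ≤ k := Nat.card_pos
      refine ⟨K ^ (k - 1), pow_ne_zero _ hK, cK.pow_left, ?_, ?_⟩
      · rw [psi_coe_pow ψ cK]
        exact pow_mem mK _
      · have he : (⟨K ^ (k - 1), mem_nonZeroDivisors_of_ne_zero (pow_ne_zero _ hK)⟩ :
            (Ideal (𝓞 E))⁰) = ⟨K, mem_nonZeroDivisors_of_ne_zero hK⟩ ^ (k - 1) := rfl
        rw [he, map_pow, eK]
        refine eq_inv_of_mul_eq_one_left ?_
        rw [← pow_succ, Nat.sub_add_cancel hk1]
        exact pow_card_eq_one'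
  have int_mem : ∀ a : Ideal (𝓞 E), IsCoprime a m →
      ψ.toFun ((a : Ideal (𝓞 E)) : FractionalIdeal (𝓞 E)⁰ E) ∈ F := by
    intro a ha
    have ha0 : a ≠ 0 := coprime_ne_zero hm ha
    obtain ⟨K, hK, cK, mK, eK⟩ := main (ClassGroup.mk0 ⟨a, mem_nonZeroDivisors_of_ne_zero ha0⟩)
    obtain ⟨γ, hγ0, hγ⟩ := (ClassGroup.mk0_eq_mk0_iff_exists_fraction_ring (K := E)).mp eK
    have hKne : ((K : Ideal (𝓞 E)) : FractionalIdeal (𝓞 E)⁰ E) ≠ 0 :=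
      FractionalIdeal.coeIdeal_ne_zero.mpr hK
    have hss : FractionalIdeal.spanSingleton (𝓞 E)⁰ γ
        = ((a : Ideal (𝓞 E)) : FractionalIdeal (𝓞 E)⁰ E)
          * (((K : Ideal (𝓞 E)) : FractionalIdeal (𝓞 E)⁰ E))⁻¹ := by
      rw [← hγ, mul_assoc, mul_inv_cancel₀ hKne, mul_one]
    have hfc : FracCoprime E m (FractionalIdeal.spanSingleton (𝓞 E)⁰ γ) := by
      rw [hss]; exact fc_mul (fc_coe ha) (fc_inv hm (fc_coe cK))
    have hmul := ψ.map_mul' _ _ hfc (fc_coe cK)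
    rw [hγ] at hmul
    rw [hmul]
    exact mul_mem (hprinc γ hfc) mK
  intro J hJ
  obtain ⟨a, b, ha, hb, hab⟩ := hJ
  have hmul := ψ.map_mul' J _ (⟨a, b, ha, hb, hab⟩ : FracCoprime E m J) (fc_coe hb)
  rw [hab] at hmul
  have hbne : ψ.toFun ((b : Ideal (𝓞 E)) : FractionalIdeal (𝓞 E)⁰ E) ≠ 0 :=
    ψ.ne_zero' _ (fc_coe hb)
  have : ψ.toFun J = ψ.toFun ((a : Ideal (𝓞 E)) : FractionalIdeal (𝓞 E)⁰ E)
      / ψ.toFun ((b : Ideal (𝓞 E)) : FractionalIdeal (𝓞 E)⁰ E) :=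
    (eq_div_iff hbne).mpr hmul.symm
  rw [this]
  exact div_mem (int_mem a ha) (int_mem b hb)


lemma basis_map (n i : ℕ) :
    Lagrange.basis (Finset.range n) (Nat.cast : ℕ → ℂ) i
      = Polynomial.map (algebraMap ℚ ℂ) (Lagrange.basis (Finset.range n) (Nat.cast : ℕ → ℚ) i) := by
  unfold Lagrange.basis Lagrange.basisDivisor
  rw [Polynomial.map_prod]
  refine Finset.prod_congr rfl fun j hj => ?_
  rw [Polynomial.map_mul, Polynomial.map_sub, Polynomial.map_C, Polynomial.map_X,
    Polynomial.map_C, map_inv₀ (algebraMap ℚ ℂ), map_sub, map_natCast, map_natCast]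
  push_cast
  norm_num [Polynomial.C_eq_natCast]

lemma rat_coeff_mem (F : IntermediateField ℚ ℂ) (n i k : ℕ) :
    (Lagrange.basis (Finset.range n) (Nat.cast : ℕ → ℂ) i).coeff k ∈ F := by
  rw [basis_map, Polynomial.coeff_map]
  exact F.algebraMap_mem _

lemma beta_mem (F : IntermediateField ℚ ℂ) {ℓ : ℕ} (hℓ : 1 ≤ ℓ) (β : ℂ)
    (hval : ∀ t : ℕ, (1 + t * β) ^ ℓ ∈ F) : β ∈ F := by
  set f : Polynomial ℂ := (1 + Polynomial.C β * Polynomial.X) ^ ℓ with hfdef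
  have h1 : (1 + Polynomial.C β * Polynomial.X).degree ≤ 1 := by
    have := Polynomial.degree_linear_le (a := β) (b := (1 : ℂ))
    rw [Polynomial.C_1] at this
    rw [add_comm]
    exact this
  have hdeg : f.degree < (Finset.range (ℓ + 1)).card := by
    rw [Finset.card_range]
    have h2 : f.degree ≤ ((ℓ : WithBot ℕ) * 1) := Polynomial.degree_pow_le_of_le ℓ h1
    rw [mul_one] at h2
    exact lt_of_le_of_lt h2 (by exact_mod_cast Nat.lt_succ_self ℓ)
  have hinj : Set.InjOn (Nat.cast : ℕ → ℂ) (Finset.range (ℓ + 1)) := Nat.cast_injective.injOn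
  have hf := Lagrange.eq_interpolate hinj hdeg
  have hcoeff : f.coeff 1 ∈ F := by
    rw [hf, Lagrange.interpolate_apply, Polynomial.finset_sum_coeff]
    refine sum_mem fun i hi => ?_
    rw [Polynomial.coeff_C_mul]
    refine mul_mem ?_ (rat_coeff_mem F _ i 1)
    have : f.eval (i : ℂ) = (1 + i * β) ^ ℓ := by
      rw [hfdef, Polynomial.eval_pow, Polynomial.eval_add, Polynomial.eval_one,
        Polynomial.eval_mul, Polynomial.eval_C, Polynomial.eval_X, mul_comm]
    rw [this]
    exact hval i
  have hc1 : f.coeff 1 = ℓ * β := by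
    have hd0 : (Polynomial.derivative f).coeff 0 = f.coeff 1 := by
      rw [Polynomial.coeff_derivative]
      norm_num
    have hd : Polynomial.derivative f = Polynomial.C (ℓ : ℂ)
        * (1 + Polynomial.C β * Polynomial.X) ^ (ℓ - 1) * Polynomial.C β := by
      rw [hfdef, Polynomial.derivative_pow]
      congr 1
      simp
    rw [← hd0, hd, Polynomial.coeff_zero_eq_eval_zero]
    simp
  have hℓ0 : (ℓ : ℂ) ≠ 0 := Nat.cast_ne_zero.mpr (by omega)
  have hrw : β = (ℓ : ℂ)⁻¹ * ((ℓ : ℂ) * β) := by field_simp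
  rw [hrw]
  exact mul_mem (inv_mem (IntermediateField.natCast_mem F ℓ)) (hc1 ▸ hcoeff)


lemma zeta_mem (F : IntermediateField ℚ ℂ) {r : ℕ} (hr0 : r ≠ 0)
    (S : Set ℂ) (hS : ∀ z ∈ S, z ^ r = 1 ∧ z ∈ F)
    (hmin : ∀ d : ℕ, 1 ≤ d → (∀ z ∈ S, z ^ d = 1) → r ≤ d) :
    Complex.exp (2 * Real.pi * Complex.I / r) ∈ F := by
  classical
  haveI : NeZero r := ⟨hr0⟩
  let V : Set ℂˣ := {u : ℂˣ | (u : ℂ) ∈ S}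
  let H : Subgroup ℂˣ := Subgroup.closure V
  have hH1 : H ≤ rootsOfUnity r ℂ := (Subgroup.closure_le _).mpr fun u hu => by
    rw [SetLike.mem_coe, mem_rootsOfUnity']
    exact (hS u hu).1
  let U : Subgroup ℂˣ :=
    { carrier := {u : ℂˣ | (u : ℂ) ∈ F}
      one_mem' := by simp only [Set.mem_setOf_eq, Units.val_one]; exact one_mem F
      mul_mem' := fun ha hb => by
        simp only [Set.mem_setOf_eq, Units.val_mul] at *
        exact mul_mem ha hb
      inv_mem' := fun ha => by
        simp only [Set.mem_setOf_eq] at *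
        rw [Units.val_inv_eq_inv_val]
        exact inv_mem ha }
  have hH2 : H ≤ U := (Subgroup.closure_le _).mpr fun u hu => (hS u hu).2
  haveI hfin : Finite H := by
    haveI : Finite (rootsOfUnity r ℂ) := inferInstance
    refine Finite.of_injective (fun h : H => (⟨h.1, hH1 h.2⟩ : rootsOfUnity r ℂ)) ?_
    intro a b hab
    exact Subtype.ext (by simpa using hab)
  set d := Nat.card H with hd
  have hd1 : 1 ≤ d := Nat.card_pos
  have hrd : r ≤ d := by
    refine hmin d hd1 fun z hz => ?_
    have hz0 : z ≠ 0 := by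
      intro h
      have h1 := (hS z hz).1
      rw [h, zero_pow hr0] at h1
      exact one_ne_zero h1.symm
    have hu : Units.mk0 z hz0 ∈ H := Subgroup.subset_closure (by
      show ((Units.mk0 z hz0 : ℂˣ) : ℂ) ∈ S
      simpa using hz)
    have h2 : (⟨Units.mk0 z hz0, hu⟩ : H) ^ d = 1 := pow_card_eq_one'
    have h3 : (Units.mk0 z hz0) ^ d = 1 := by
      have := congrArg (fun w : H => (w : ℂˣ)) h2
      simpa using this
    have := congrArg (fun w : ℂˣ => (w : ℂ)) h3
    simpa using this
  have hcard : Nat.card (rootsOfUnity r ℂ) = r := by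
    exact Complex.card_rootsOfUnity r
  have hdvd : d ∣ r := hcard ▸ Subgroup.card_dvd_of_le hH1
  have hdr : d = r := le_antisymm (Nat.le_of_dvd (Nat.pos_of_ne_zero hr0) hdvd) hrd
  have hHeq : H = rootsOfUnity r ℂ :=
    Subgroup.eq_of_le_of_card_ge hH1 (by rw [hcard, ← hd, hdr])
  have hζu : Units.mk0 (Complex.exp (2 * Real.pi * Complex.I / r)) (Complex.exp_ne_zero _)
      ∈ rootsOfUnity r ℂ := by
    rw [mem_rootsOfUnity']
    simpa using (Complex.isPrimitiveRoot_exp r hr0).pow_eq_one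
  have := hH2 (hHeq ▸ hζu)
  exact this


lemma exists_nonreal (hE : IsImagQuad E) (hm0 : m ≠ 0) :
    ∃ β : 𝓞 E, β ∈ m ∧ ((β : E) : ℂ).im ≠ 0 := by
  obtain ⟨b0, hb0m, hb0⟩ := Submodule.exists_mem_ne_zero_of_ne_bot hm0
  by_cases him : ((b0 : E) : ℂ).im ≠ 0
  · exact ⟨b0, hb0m, him⟩
  push_neg at him
  have ht : ∃ t : 𝓞 E, ((t : E) : ℂ).im ≠ 0 := by
    by_contra hall
    push_neg at hall
    obtain ⟨z, hz⟩ := hE.2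
    obtain ⟨x, y, hy, hxy⟩ := IsFractionRing.div_surjective (A := 𝓞 E) (z : E)
    have hzc : (z : ℂ) = ((x : E) : ℂ) / ((y : E) : ℂ) := by
      rw [← hxy]
      push_cast
      norm_cast
    apply hz
    rw [hzc, Complex.div_im, hall x, hall y]
    simp
  obtain ⟨t, ht⟩ := ht
  refine ⟨b0 * t, Ideal.mul_mem_right t m hb0m, ?_⟩
  have hb0c : ((b0 : E) : ℂ) ≠ 0 := by
    simp only [ne_eq, map_eq_zero]
    exact_mod_cast hb0
  have hre : ((b0 : E) : ℂ).re ≠ 0 := by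
    intro h
    exact hb0c (Complex.ext h him)
  have hc : (((b0 * t : 𝓞 E) : E) : ℂ) = ((b0 : E) : ℂ) * ((t : E) : ℂ) := by push_cast; norm_cast
  rw [hc, Complex.mul_im, him]
  simpa using mul_ne_zero hre ht

lemma E_le_valueField (ψ : Grossenchar E m ℓ) (hE : IsImagQuad E) (hm0 : m ≠ 0)
    (hℓ : 1 ≤ ℓ) : E ≤ ψ.valueField := by
  obtain ⟨β, hβm, hβim⟩ := exists_nonreal hE hm0
  have hβvf : ((β : E) : ℂ) ∈ ψ.valueField := by
    refine beta_mem _ hℓ _ fun t => ?_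
    set αt : 𝓞 E := 1 + (t : 𝓞 E) * β with hαt
    have hmem : αt - 1 ∈ m := by
      rw [hαt, add_sub_cancel_left]
      exact Ideal.mul_mem_left m _ hβm
    have hcop : IsCoprime (Ideal.span {αt}) m := by
      rw [Ideal.isCoprime_iff_sup_eq, Ideal.eq_top_iff_one]
      have h1 : (1 : 𝓞 E) = αt + (-((t : 𝓞 E) * β)) := by rw [hαt]; ring
      rw [h1]
      exact Submodule.add_mem_sup (Ideal.mem_span_singleton_self αt)
        (neg_mem (Ideal.mul_mem_left m _ hβm))
    have hψ := ψ.princ' αt hcop hmem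
    have hval : ((αt : E) : ℂ) ^ ℓ ∈ ψ.valueField :=
      hψ ▸ IntermediateField.subset_adjoin ℚ _
        ⟨((Ideal.span {αt} : Ideal (𝓞 E)) : FractionalIdeal (𝓞 E)⁰ E), fc_coe hcop, rfl⟩
    have hcast : ((αt : E) : ℂ) = 1 + (t : ℂ) * ((β : E) : ℂ) := by
      rw [hαt]; push_cast; norm_cast
    rwa [← hcast]
  set βE : E := (β : E) with hβE
  have hβne : βE ≠ 0 := by
    intro h
    apply hβim
    rw [show ((β : E) : ℂ) = ((βE : E) : ℂ) from rfl, h]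
    simp
  have hli : LinearIndependent ℚ ![(1 : E), βE] := by
    rw [linearIndependent_fin2]
    refine ⟨by simpa using hβne, ?_⟩
    intro a ha
    simp only [Matrix.cons_val_one, Matrix.head_cons, Matrix.cons_val_zero] at ha
    -- ha : a • βE = 1
    have him := congrArg (fun y : E => ((y : ℂ)).im) ha
    simp only [OneMemClass.coe_one, Complex.one_im] at him
    have hsm : ((a • βE : E) : ℂ) = (a : ℂ) * (βE : ℂ) := by
      have h1 : ((a • βE : E) : ℂ) = a • ((βE : E) : ℂ) := E.val.toLinearMap.map_smul a βE
      rw [h1, Algebra.smul_def, eq_ratCast (algebraMap ℚ ℂ) a]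
    rw [hsm, Complex.mul_im, Complex.ratCast_im, Complex.ratCast_re] at him
    -- him : a * β.im + 0 * β.re = 0
    have ha0 : a = 0 := by
      have : (a : ℝ) * ((βE : ℂ)).im = 0 := by linarith [him]
      rcases mul_eq_zero.mp this with h | h
      · exact_mod_cast h
      · exact absurd h hβim
    rw [ha0, zero_smul] at ha
    exact one_ne_zero ha.symm
  have hspan : Submodule.span ℚ (Set.range ![(1 : E), βE]) = ⊤ := by
    refine hli.span_eq_top_of_card_eq_finrank ?_
    rw [hE.1]
    simp
  intro z hz
  have hz' : (⟨z, hz⟩ : E) ∈ Submodule.span ℚ (Set.range ![(1 : E), βE]) := by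
    rw [hspan]; trivial
  obtain ⟨c, hc⟩ := (Submodule.mem_span_range_iff_exists_fun ℚ).mp hz'
  have hcc := congrArg (fun y : E => (y : ℂ)) hc
  simp only [Fin.sum_univ_two, Matrix.cons_val_zero, Matrix.cons_val_one, Matrix.head_cons] at hcc
  -- hcc : ↑(c 0 • 1 + c 1 • βE) = z
  have hrw : (z : ℂ) = (c 0 : ℂ) + (c 1 : ℂ) * (βE : ℂ) := by
    rw [← hcc]
    push_cast
    rw [Algebra.smul_def, Algebra.smul_def, eq_ratCast (algebraMap ℚ ℂ),
      eq_ratCast (algebraMap ℚ ℂ)]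
    ring
  rw [hrw]
  refine add_mem ?_ (mul_mem ?_ hβvf)
  · have := ψ.valueField.algebraMap_mem (c 0)
    rwa [eq_ratCast (algebraMap ℚ ℂ)] at this
  · have := ψ.valueField.algebraMap_mem (c 1)
    rwa [eq_ratCast (algebraMap ℚ ℂ)] at this

end Aux

/-- Condition (★): the modulus character of `ψ` restricts on `ℤ` to the quadratic character
attached to `E`; concretely, for every rational prime `p ∤ Δ_E` with `pO_E` coprime to `m`,
`ψ(pO_E) = p^ℓ` if `p` is split in `E` and `ψ(pO_E) = -p^ℓ` if `p` is inert in `E`. -/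
def Grossenchar.Star {E : IntermediateField ℚ ℂ} [NumberField E] {m : Ideal (𝓞 E)} {ℓ : ℕ}
    (ψ : Grossenchar E m ℓ) : Prop :=
  ∀ p : ℕ, p.Prime → ¬ ((p : ℤ) ∣ NumberField.discr E) →
    IsCoprime (Ideal.span {(p : 𝓞 E)}) m →
    ((∃ P Q : Ideal (𝓞 E), P.IsPrime ∧ Q.IsPrime ∧ P ≠ Q ∧
        Ideal.span {(p : 𝓞 E)} = P * Q) →
      ψ.toFun ((Ideal.span {(p : 𝓞 E)} : Ideal (𝓞 E)) : FractionalIdeal (𝓞 E)⁰ E)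
        = (p : ℂ) ^ ℓ) ∧
    ((Ideal.span {(p : 𝓞 E)}).IsPrime →
      ψ.toFun ((Ideal.span {(p : 𝓞 E)} : Ideal (𝓞 E)) : FractionalIdeal (𝓞 E)⁰ E)
        = -((p : ℂ) ^ ℓ))

/-- The modulus character of `ψ` is quadratic: `ψ(αO_E)² = α^{2ℓ}` for all `α ∈ O_E` with
`αO_E` coprime to `m`. -/
def Grossenchar.QuadModChar {E : IntermediateField ℚ ℂ} {m : Ideal (𝓞 E)} {ℓ : ℕ}
    (ψ : Grossenchar E m ℓ) : Prop :=
  ∀ α : 𝓞 E, IsCoprime (Ideal.span {α}) m →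
    ψ.toFun ((Ideal.span {α} : Ideal (𝓞 E)) : FractionalIdeal (𝓞 E)⁰ E) ^ 2
      = ((α : E) : ℂ) ^ (2 * ℓ)

/-- `r` is the order of the modulus character of `ψ`: the least `r ≥ 1` such that
`ψ(αO_E)^r = α^{rℓ}` for all `α ∈ O_E` with `αO_E` coprime to `m`. -/
def Grossenchar.ModCharOrder {E : IntermediateField ℚ ℂ} {m : Ideal (𝓞 E)} {ℓ : ℕ}
    (ψ : Grossenchar E m ℓ) (r : ℕ) : Prop :=
  1 ≤ r ∧
  (∀ α : 𝓞 E, IsCoprime (Ideal.span {α}) m →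
    ψ.toFun ((Ideal.span {α} : Ideal (𝓞 E)) : FractionalIdeal (𝓞 E)⁰ E) ^ r
      = ((α : E) : ℂ) ^ (r * ℓ)) ∧
  ∀ r' : ℕ, 1 ≤ r' →
    (∀ α : 𝓞 E, IsCoprime (Ideal.span {α}) m →
      ψ.toFun ((Ideal.span {α} : Ideal (𝓞 E)) : FractionalIdeal (𝓞 E)⁰ E) ^ r'
        = ((α : E) : ℂ) ^ (r' * ℓ)) → r ≤ r'

/-- The ideal `𝔡_E`: `𝔇` if `Δ_E` is odd, `𝔭₂𝔇` if `Δ_E ≡ 4 (mod 8)`, and `2𝔇` if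
`Δ_E ≡ 0 (mod 8)`, where `𝔇 = differentIdeal ℤ (𝓞 E)` and `𝔭₂` is the unique prime above `2`
(obtained as the radical of `2𝓞 E`, since `2` ramifies when `Δ_E` is even). -/
def dIdeal (E : IntermediateField ℚ ℂ) [NumberField E] : Ideal (𝓞 E) :=
  if ¬ (2 ∣ NumberField.discr E) then differentIdeal ℤ (𝓞 E)
  else if NumberField.discr E % 8 = 4 then
    (Ideal.span {(2 : 𝓞 E)}).radical * differentIdeal ℤ (𝓞 E)
  else Ideal.span {(2 : 𝓞 E)} * differentIdeal ℤ (𝓞 E)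

/-- `ψ` is primitive: its defining property does not factor through any proper divisor of the
modulus. -/
def Grossenchar.Primitive {E : IntermediateField ℚ ℂ} {m : Ideal (𝓞 E)} {ℓ : ℕ}
    (ψ : Grossenchar E m ℓ) : Prop :=
  ¬ ∃ m' : Ideal (𝓞 E), m' ∣ m ∧ m' ≠ m ∧
    ∀ α : 𝓞 E, IsCoprime (Ideal.span {α}) m → α - 1 ∈ m' →
      ψ.toFun ((Ideal.span {α} : Ideal (𝓞 E)) : FractionalIdeal (𝓞 E)⁰ E) = ((α : E) : ℂ) ^ ℓ

/-- Let `r` be the order of the modulus character of `ψ`, let the classes of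
ideals `𝔱 i` (coprime to `m`) generate `Cl(E)`, let `n i` be the order of the class of `𝔱 i`,
and let `θ i` generate `𝔱 i ^ (n i)`.  Then there are `r`-th roots of unity `u i` and complex
numbers `x i` with `x i ^ (n i) = u i · θ i ^ ℓ`, such that `L_ψ` is generated by `E`,
`e^{2πi/r}` and the `x i`. -/
theorem stmt_4 (E : IntermediateField ℚ ℂ) [NumberField E] (hE : IsImagQuad E)
    (m : Ideal (𝓞 E)) (hm : m ≠ 0) (ℓ : ℕ) (hℓ : 1 ≤ ℓ)
    (ψ : Grossenchar E m ℓ) (r : ℕ) (hr : ψ.ModCharOrder r)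
    (g : ℕ) (𝔱 : Fin g → Ideal (𝓞 E)) (h0 : ∀ i, 𝔱 i ≠ 0)
    (hcop : ∀ i, IsCoprime (𝔱 i) m)
    (hgen : Subgroup.closure
      (Set.range fun i => ClassGroup.mk0 ⟨𝔱 i, mem_nonZeroDivisors_of_ne_zero (h0 i)⟩) = ⊤)
    (n : Fin g → ℕ)
    (hn : ∀ i, n i = orderOf (ClassGroup.mk0 ⟨𝔱 i, mem_nonZeroDivisors_of_ne_zero (h0 i)⟩))
    (θ : Fin g → 𝓞 E) (hθ : ∀ i, 𝔱 i ^ n i = Ideal.span {θ i}) :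
    ∃ u x : Fin g → ℂ,
      (∀ i, u i ^ r = 1) ∧
      (∀ i, x i ^ n i = u i * ((θ i : E) : ℂ) ^ ℓ) ∧
      ψ.valueField = E ⊔ IntermediateField.adjoin ℚ
        (insert (Complex.exp (2 * Real.pi * Complex.I / r)) (Set.range x)) := by
  classical
  have hmt : m ≠ ⊤ := m_ne_top ψ hℓ
  have hr0 : r ≠ 0 := by have := hr.1; omega
  haveI : NeZero r := ⟨hr0⟩
  set x : Fin g → ℂ :=
    fun i => ψ.toFun ((𝔱 i : Ideal (𝓞 E)) : FractionalIdeal (𝓞 E)⁰ E) with hxdef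
  have hθcop : ∀ i, IsCoprime (Ideal.span {θ i}) m := fun i => (hθ i) ▸ (hcop i).pow_left
  have hαne : ∀ α : 𝓞 E, IsCoprime (Ideal.span {α}) m → ((α : E) : ℂ) ≠ 0 := by
    intro α hα
    have h1 : Ideal.span {α} ≠ 0 := coprime_ne_zero hmt hα
    have h2 : α ≠ 0 := by
      intro h
      apply h1
      rw [h, Ideal.zero_eq_bot, Ideal.span_singleton_eq_bot]
    simp only [ne_eq, map_eq_zero]
    exact_mod_cast h2
  set u : Fin g → ℂ := fun i =>
    ψ.toFun ((Ideal.span {θ i} : Ideal (𝓞 E)) : FractionalIdeal (𝓞 E)⁰ E)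
      / ((θ i : E) : ℂ) ^ ℓ with hudef
  have hetapow : ∀ α : 𝓞 E, ∀ _ : IsCoprime (Ideal.span {α}) m,
      (ψ.toFun ((Ideal.span {α} : Ideal (𝓞 E)) : FractionalIdeal (𝓞 E)⁰ E)
        / ((α : E) : ℂ) ^ ℓ) ^ r = 1 := by
    intro α hα
    rw [div_pow, hr.2.1 α hα, ← pow_mul, mul_comm ℓ r]
    exact div_self (pow_ne_zero _ (hαne α hα))
  have hur : ∀ i, u i ^ r = 1 := fun i => hetapow (θ i) (hθcop i)
  have hxn : ∀ i, x i ^ n i = u i * ((θ i : E) : ℂ) ^ ℓ := by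
    intro i
    have h1 : x i ^ n i
        = ψ.toFun ((Ideal.span {θ i} : Ideal (𝓞 E)) : FractionalIdeal (𝓞 E)⁰ E) := by
      rw [hxdef]
      simp only
      rw [← psi_coe_pow ψ (hcop i) (n i), hθ i]
    rw [h1, hudef]
    simp only
    exact (div_mul_cancel₀ _ (pow_ne_zero ℓ (hαne (θ i) (hθcop i)))).symm
  set ζ : ℂ := Complex.exp (2 * Real.pi * Complex.I / r) with hζdef
  set L' : IntermediateField ℚ ℂ :=
    E ⊔ IntermediateField.adjoin ℚ (insert ζ (Set.range x)) with hL'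
  refine ⟨u, x, hur, hxn, ?_⟩
  have hEL : E ≤ L' := le_sup_left
  have hadj : IntermediateField.adjoin ℚ (insert ζ (Set.range x)) ≤ L' := le_sup_right
  have hζL : ζ ∈ L' := hadj (IntermediateField.subset_adjoin ℚ _ (Set.mem_insert _ _))
  have hxL : ∀ i, x i ∈ L' := fun i =>
    hadj (IntermediateField.subset_adjoin ℚ _ (Set.mem_insert_of_mem _ ⟨i, rfl⟩))
  have hroot : ∀ z : ℂ, z ^ r = 1 → z ∈ L' := by
    intro z hz
    obtain ⟨i, _, hzi⟩ := (Complex.isPrimitiveRoot_exp r hr0).eq_pow_of_pow_eq_one hz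
    rw [← hzi]
    exact pow_mem hζL i
  have hspanmem : ∀ α : 𝓞 E, IsCoprime (Ideal.span {α}) m →
      ψ.toFun ((Ideal.span {α} : Ideal (𝓞 E)) : FractionalIdeal (𝓞 E)⁰ E) ∈ L' := by
    intro α hα
    have hα0 : ((α : E) : ℂ) ≠ 0 := hαne α hα
    have heq : ψ.toFun ((Ideal.span {α} : Ideal (𝓞 E)) : FractionalIdeal (𝓞 E)⁰ E)
        = (ψ.toFun ((Ideal.span {α} : Ideal (𝓞 E)) : FractionalIdeal (𝓞 E)⁰ E)
            / ((α : E) : ℂ) ^ ℓ) * ((α : E) : ℂ) ^ ℓ := by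
      field_simp
    rw [heq]
    exact mul_mem (hroot _ (hetapow α hα)) (pow_mem (hEL (SetLike.coe_mem (α : E))) ℓ)
  have hprinc : ∀ γ : E, FracCoprime E m (FractionalIdeal.spanSingleton (𝓞 E)⁰ γ) →
      ψ.toFun (FractionalIdeal.spanSingleton (𝓞 E)⁰ γ) ∈ L' := by
    intro γ hγ
    obtain ⟨α, β, hαc, hβ0, heq⟩ := key_principal ψ hmt γ hγ
    rw [heq]
    exact div_mem (hspanmem α hαc) (pow_mem (hEL (SetLike.coe_mem (β : E))) ℓ)
  have h1 : ψ.valueField ≤ L' := by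
    unfold Grossenchar.valueField
    refine IntermediateField.adjoin_le_iff.mpr ?_
    rintro w ⟨J, hJ, rfl⟩
    exact psi_image_mem ψ hmt L' hprinc g 𝔱 h0 hcop hgen (fun i => hxL i) J hJ
  have hvE : E ≤ ψ.valueField := E_le_valueField ψ hE hm hℓ
  have hψmem : ∀ α : 𝓞 E, IsCoprime (Ideal.span {α}) m →
      ψ.toFun ((Ideal.span {α} : Ideal (𝓞 E)) : FractionalIdeal (𝓞 E)⁰ E) ∈ ψ.valueField := by
    intro α hα
    exact IntermediateField.subset_adjoin ℚ _
      ⟨((Ideal.span {α} : Ideal (𝓞 E)) : FractionalIdeal (𝓞 E)⁰ E), fc_coe hα, rfl⟩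
  have hζv : ζ ∈ ψ.valueField := by
    refine zeta_mem _ hr0
      {z : ℂ | ∃ α : 𝓞 E, IsCoprime (Ideal.span {α}) m ∧
        z = ψ.toFun ((Ideal.span {α} : Ideal (𝓞 E)) : FractionalIdeal (𝓞 E)⁰ E)
          / ((α : E) : ℂ) ^ ℓ} ?_ ?_
    · rintro z ⟨α, hα, rfl⟩
      refine ⟨hetapow α hα, ?_⟩
      exact div_mem (hψmem α hα) (pow_mem (hvE (SetLike.coe_mem (α : E))) ℓ)
    · intro d hd1 hall
      refine hr.2.2 d hd1 fun α hα => ?_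
      have hz := hall _ ⟨α, hα, rfl⟩
      rw [div_pow] at hz
      have hαd : (((α : E) : ℂ) ^ ℓ) ^ d ≠ 0 := pow_ne_zero _ (pow_ne_zero _ (hαne α hα))
      have := (div_eq_one_iff_eq hαd).mp hz
      rw [this, ← pow_mul, mul_comm ℓ d]
  have h2 : L' ≤ ψ.valueField := by
    rw [hL']
    refine sup_le hvE (IntermediateField.adjoin_le_iff.mpr ?_)
    intro w hw
    rcases Set.mem_insert_iff.mp hw with rfl | ⟨i, rfl⟩
    · exact hζv
    · exact IntermediateField.subset_adjoin ℚ _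
        ⟨((𝔱 i : Ideal (𝓞 E)) : FractionalIdeal (𝓞 E)⁰ E), fc_coe (hcop i), rfl⟩
  exact le_antisymm h1 h2
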